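/- Let μ be the standard Gaussian measure on ℝ^N (the product of N copies of the real Gaussian distribution with mean 0 and variance 1). Then for every real a > 0, ∫ Q(a‖g‖) dμ(g) ≤ (1/2) · (1 + a²)^{-N/2}. -/

import Mathlib

/-!
For `u ≥ x ≥ 0` we have `u² ≥ x² + (u - x)²`, so shifting the tail integral to the origin gives
the Chernoff-type bound `Q x ≤ exp (-x²/2) / 2`. The bound `exp (-a²‖g‖²/2)` factorises over the
coordinates, and each factor has Gaussian mean `(1 + a²)^(-1/2)`.
-/

open Real MeasureTheory ProbabilityTheory

/-- The Gaussian Q-function: `Q x = (1/√(2π)) ∫_x^∞ exp(-u²/2) du`. -/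
noncomputable def gaussQ (x : ℝ) : ℝ :=
  (Real.sqrt (2 * Real.pi))⁻¹ * ∫ u in Set.Ioi x, Real.exp (-u ^ 2 / 2)

lemma integrable_exp_neg_sq_div_two : Integrable fun u : ℝ => exp (-u ^ 2 / 2) := by
  simpa [neg_div, div_eq_inv_mul] using integrable_exp_neg_mul_sq (b := 1 / 2) (by norm_num)

lemma setIntegral_Ioi_exp_neg_sub_sq_div_two (x : ℝ) :
    ∫ u in Set.Ioi x, exp (-(u - x) ^ 2 / 2) = √(2 * π) / 2 := by
  have hshift := (measurePreserving_add_right volume x).setIntegral_preimage_emb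
    (measurableEmbedding_addRight x) (fun u => exp (-(u - x) ^ 2 / 2)) (Set.Ioi x)
  simp only [Set.preimage_add_const_Ioi, sub_self, add_sub_cancel_right] at hshift
  rw [← hshift]
  simpa [neg_div, div_eq_inv_mul, mul_comm] using integral_gaussian_Ioi (1 / 2)

lemma gaussQ_nonneg (x : ℝ) : 0 ≤ gaussQ x :=
  mul_nonneg (inv_nonneg.2 (sqrt_nonneg _)) (integral_nonneg fun _ => (exp_pos _).le)

lemma gaussQ_le_exp_neg_sq_div_two {x : ℝ} (hx : 0 ≤ x) :
    gaussQ x ≤ exp (-x ^ 2 / 2) / 2 := by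
  have hint_shift : Integrable fun u : ℝ => exp (-(u - x) ^ 2 / 2) :=
    integrable_exp_neg_sq_div_two.comp_sub_right x
  have htail : ∫ u in Set.Ioi x, exp (-u ^ 2 / 2) ≤
      ∫ u in Set.Ioi x, exp (-x ^ 2 / 2) * exp (-(u - x) ^ 2 / 2) := by
    refine setIntegral_mono_on integrable_exp_neg_sq_div_two.integrableOn
      (hint_shift.const_mul _).integrableOn measurableSet_Ioi fun u hu => ?_
    rw [← exp_add, exp_le_exp]
    nlinarith [le_of_lt (Set.mem_Ioi.1 hu)]
  have hsqrt : 0 < √(2 * π) := sqrt_pos.2 (by positivity)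
  calc gaussQ x
      ≤ (√(2 * π))⁻¹ * ∫ u in Set.Ioi x, exp (-x ^ 2 / 2) * exp (-(u - x) ^ 2 / 2) :=
        mul_le_mul_of_nonneg_left htail (inv_nonneg.2 hsqrt.le)
    _ = exp (-x ^ 2 / 2) / 2 := by
        rw [integral_const_mul, setIntegral_Ioi_exp_neg_sub_sq_div_two]
        field_simp

lemma integral_exp_neg_mul_sq_gaussianReal {c : ℝ} (hc : 0 < 1 + 2 * c) :
    ∫ x, exp (-c * x ^ 2) ∂gaussianReal 0 1 = (1 + 2 * c) ^ (-(1 / 2) : ℝ) := by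
  have hdensity : ∀ x : ℝ, gaussianPDFReal 0 1 x • exp (-c * x ^ 2) =
      (√(2 * π))⁻¹ * exp (-(c + 1 / 2) * x ^ 2) := by
    intro x
    rw [gaussianPDFReal, smul_eq_mul, mul_assoc, ← exp_add]
    simp only [NNReal.coe_one, mul_one, sub_zero]
    ring_nf
  rw [integral_gaussianReal_eq_integral_smul one_ne_zero]
  simp_rw [hdensity]
  rw [integral_const_mul, integral_gaussian, rpow_neg hc.le, ← sqrt_eq_rpow,
    show π / (c + 1 / 2) = 2 * π / (1 + 2 * c) by field_simp; ring,
    sqrt_div (by positivity)]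
  field_simp

lemma integral_exp_neg_mul_sum_sq_pi_gaussianReal {ι : Type*} [Fintype ι] {c : ℝ}
    (hc : 0 < 1 + 2 * c) :
    ∫ g : ι → ℝ, exp (-c * ∑ i, g i ^ 2) ∂(Measure.pi fun _ => gaussianReal 0 1) =
      (1 + 2 * c) ^ (-(Fintype.card ι : ℝ) / 2) := by
  simp_rw [Finset.mul_sum, exp_sum]
  rw [integral_fintype_prod_eq_pow (fun x : ℝ => exp (-c * x ^ 2)),
    integral_exp_neg_mul_sq_gaussianReal hc, ← rpow_mul_natCast hc.le]
  ring_nf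

/-- Upper bound on the Gaussian average of `Q(a‖g‖)`:
`∫ Q(a‖g‖) dμ ≤ (1/2)(1 + a²)^{-N/2}`. -/
theorem gaussian_avg_Q_le (N : ℕ) (a : ℝ) (ha : 0 < a) :
    ∫ g : Fin N → ℝ, gaussQ (a * Real.sqrt (∑ i, g i ^ 2))
        ∂(Measure.pi fun _ : Fin N => gaussianReal 0 1) ≤
      (1 / 2) * (1 + a ^ 2) ^ (-(N : ℝ) / 2) := by
  have hc : 0 < 1 + 2 * (a ^ 2 / 2) := by positivity
  have hmean := integral_exp_neg_mul_sum_sq_pi_gaussianReal (ι := Fin N) hc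
  rw [Fintype.card_fin, mul_div_cancel₀ _ two_ne_zero] at hmean
  have hint : Integrable (fun g : Fin N → ℝ => exp (-(a ^ 2 / 2) * ∑ i, g i ^ 2))
      (Measure.pi fun _ => gaussianReal 0 1) :=
    .of_integral_ne_zero (hmean ▸ (rpow_pos_of_pos (by positivity) _).ne')
  have hpointwise (g : Fin N → ℝ) :
      gaussQ (a * √(∑ i, g i ^ 2)) ≤ exp (-(a ^ 2 / 2) * ∑ i, g i ^ 2) / 2 := by
    convert gaussQ_le_exp_neg_sq_div_two (x := a * √(∑ i, g i ^ 2)) (by positivity) using 3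
    rw [mul_pow, sq_sqrt (by positivity)]
    ring
  calc _ ≤ ∫ g : Fin N → ℝ, exp (-(a ^ 2 / 2) * ∑ i, g i ^ 2) / 2
        ∂(Measure.pi fun _ => gaussianReal 0 1) :=
        integral_mono_of_nonneg (.of_forall fun _ => gaussQ_nonneg _) (hint.div_const 2)
          (.of_forall hpointwise)
    _ = _ := by rw [integral_div, hmean]; ring
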